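/- arXiv:2105.00358 — 2 statements merged into one kernel-verified Lean document; each statement's English description precedes it below -/
import Mathlib

section
/- Under the conditions of the previous monotonicity bounds, if in addition F₁(0) = 0 so that q(0) = α, then for every p ∈ [0,1]: max{q(p) − α, α − q(p)} ≤ p ≤ min{q(p) + α, (1−α) + (1−q(p))}. -/
/-- Under the monotonicity bounds of the previous statement, if in addition `F₁(0) = 0`
(so that `q(0) = α`, together with `F₀(0) = 0`), then for every `p ∈ [0,1]`:
`max{q(p) − α, α − q(p)} ≤ p ≤ min{q(p) + α, (1−α) + (1−q(p))}` (Proposition 1). -/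
theorem propensity_pointwise_bounds
    (α : ℝ) (hα : α ∈ Set.Ioo (0:ℝ) 1)
    (F0 F1 q : ℝ → ℝ)
    (hqrange : ∀ p ∈ Set.Icc (0:ℝ) 1, q p ∈ Set.Icc (0:ℝ) 1)
    (hF1 : ∀ p ∈ Set.Icc (0:ℝ) 1, F1 p = (p + α - q p) / (2 * α))
    (hF0 : ∀ p ∈ Set.Icc (0:ℝ) 1, F0 p = (p - α + q p) / (2 * (1 - α)))
    (hmono0 : ∀ p' ∈ Set.Icc (0:ℝ) 1, ∀ p ∈ Set.Icc (0:ℝ) 1, p' ≤ p →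
      0 ≤ F0 p - F0 p' ∧ F0 p - F0 p' ≤ 1)
    (hmono1 : ∀ p' ∈ Set.Icc (0:ℝ) 1, ∀ p ∈ Set.Icc (0:ℝ) 1, p' ≤ p →
      0 ≤ F1 p - F1 p' ∧ F1 p - F1 p' ≤ 1)
    (hF10 : F1 0 = 0) (hF00 : F0 0 = 0) :
    ∀ p ∈ Set.Icc (0:ℝ) 1,
      max (q p - α) (α - q p) ≤ p ∧
      p ≤ min (q p + α) ((1 - α) + (1 - q p)) := by
  obtain ⟨ha0, ha1⟩ := hα
  intro p hp
  have h0 : (0:ℝ) ∈ Set.Icc (0:ℝ) 1 := ⟨le_refl _, zero_le_one⟩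
  have h1 := hmono1 0 h0 p hp hp.1
  have h2 := hmono0 0 h0 p hp hp.1
  rw [hF10, hF1 p hp] at h1
  rw [hF00, hF0 p hp] at h2
  have hα2 : (0:ℝ) < 2 * α := by linarith
  have hβ2 : (0:ℝ) < 2 * (1 - α) := by linarith
  obtain ⟨h1a, h1b⟩ := h1
  obtain ⟨h2a, h2b⟩ := h2
  rw [sub_zero] at h1a h1b h2a h2b
  rw [le_div_iff₀ hα2] at h1a
  rw [div_le_one hα2] at h1b
  rw [le_div_iff₀ hβ2] at h2a
  rw [div_le_one hβ2] at h2b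
  constructor
  · exact max_le (by linarith) (by linarith)
  · exact le_min (by linarith) (by linarith)
end

section
/- Suppose random variables satisfy: Z ⫫ (Y₁, Y₀, V), V ~ U[0,1], Y = Y₁·1{V ≤ P(Z)} + Y₀·1{V > P(Z)}, and Y₁, Y₀ are integrable. Then for every z in the support of Z, E[Y | Z = z] = ∫₀^{P(z)} E[Y₁ | V = v] dv + ∫_{P(z)}^{1} E[Y₀ | V = v] dv. -/
/-!
Because `Z` is independent of `W = (Y₁, Y₀, V)`, the conditional law of `W` given `Z` is the law
of `W` itself, so conditioning the function `Y = select(Z, W)` on `Z` amounts to freezing `Z` and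
integrating over `W`. With `P(Z) = p` frozen, the selection rule splits that integral into
`∫_{V ≤ p} Y₁ + ∫_{V > p} Y₀`, and the marginal treatment responses turn these into
`∫₀^p m₁` and `∫_p^1 m₀`.
-/

open MeasureTheory ProbabilityTheory Set

namespace ProbabilityTheory

variable {Ω α β F : Type*} {mΩ : MeasurableSpace Ω} {mα : MeasurableSpace α}
  {mβ : MeasurableSpace β} [StandardBorelSpace β] [Nonempty β]
  {μ : Measure Ω} [IsFiniteMeasure μ] {X : Ω → α} {W : Ω → β}

lemma IndepFun.condDistrib_ae_eq_const (h : IndepFun X W μ) (hX : AEMeasurable X μ)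
    (hW : AEMeasurable W μ) :
    condDistrib W X μ =ᵐ[μ.map X] Kernel.const α (μ.map W) := by
  rw [condDistrib_ae_eq_iff_measure_eq_compProd X hW, Measure.compProd_const]
  exact (indepFun_iff_map_prod_eq_prod_map_map hX hW).mp h

theorem IndepFun.condExp_comp_prod_ae_eq_integral [NormedAddCommGroup F] [NormedSpace ℝ F]
    [CompleteSpace F] (h : IndepFun X W μ) (hX : Measurable X) (hW : AEMeasurable W μ)
    {f : α × β → F} (hf : StronglyMeasurable f)
    (hf_int : Integrable (fun ω => f (X ω, W ω)) μ) :
    μ[fun ω => f (X ω, W ω) | mα.comap X] =ᵐ[μ] fun ω => ∫ ω', f (X ω, W ω') ∂μ := by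
  filter_upwards [condExp_prod_ae_eq_integral_condDistrib hX hW hf hf_int,
    ae_of_ae_map hX.aemeasurable (h.condDistrib_ae_eq_const hX.aemeasurable hW)] with ω hω hκ
  rw [hω, hκ, Kernel.const_apply, integral_map hW]
  exact (hf.comp_measurable measurable_prodMk_left).aestronglyMeasurable

end ProbabilityTheory

namespace MeasureTheory

variable {Ω : Type*} {mΩ : MeasurableSpace Ω} {μ : Measure Ω} {V : Ω → ℝ} {f g : Ω → ℝ}

lemma Integrable.ite_le {T : Ω → ℝ} (hV : Measurable V) (hT : Measurable T)
    (hf : Integrable f μ) (hg : Integrable g μ) :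
    Integrable (fun ω => if V ω ≤ T ω then f ω else g ω) μ := by
  classical
  exact Integrable.piecewise (measurableSet_le hV hT) hf.integrableOn hg.integrableOn

lemma integral_ite_le (hV : Measurable V) (hf : Integrable f μ) (hg : Integrable g μ) (t : ℝ) :
    ∫ ω, (if V ω ≤ t then f ω else g ω) ∂μ
      = ∫ ω in V ⁻¹' Iic t, f ω ∂μ + ∫ ω in V ⁻¹' Ioi t, g ω ∂μ := by
  classical
  rw [← compl_Iic, preimage_compl,
    ← integral_piecewise (hV measurableSet_Iic) hf.integrableOn hg.integrableOn]
  rfl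

end MeasureTheory

section MarginalResponse

variable {Ω : Type*} {mΩ : MeasurableSpace Ω}

/-- `m` is a version of the marginal response `v ↦ E[Y | V = v]` on `[0, 1]` when `V` is uniform
on `[0, 1]`. -/
def IsMarginalResponse (μ : Measure Ω) (V Y : Ω → ℝ) (m : ℝ → ℝ) : Prop :=
  ∀ s : Set ℝ, MeasurableSet s → ∫ ω in V ⁻¹' s, Y ω ∂μ = ∫ v in s ∩ Icc 0 1, m v

namespace IsMarginalResponse

variable {μ : Measure Ω} {V Y : Ω → ℝ} {m : ℝ → ℝ} {t : ℝ}

lemma setIntegral_preimage_Iic (hm : IsMarginalResponse μ V Y m) (ht : t ≤ 1) :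
    ∫ ω in V ⁻¹' Iic t, Y ω ∂μ = ∫ v in Ioc 0 t, m v := by
  have hIcc : Iic t ∩ Icc 0 1 = Icc 0 t := by
    ext v; simp only [mem_inter_iff, mem_Iic, mem_Icc]; grind
  rw [hm _ measurableSet_Iic, hIcc, setIntegral_congr_set Ioc_ae_eq_Icc]

lemma setIntegral_preimage_Ioi (hm : IsMarginalResponse μ V Y m) (ht : 0 ≤ t) :
    ∫ ω in V ⁻¹' Ioi t, Y ω ∂μ = ∫ v in Ioc t 1, m v := by
  have hIoc : Ioi t ∩ Icc 0 1 = Ioc t 1 := by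
    ext v; simp only [mem_inter_iff, mem_Ioi, mem_Icc, mem_Ioc]; grind
  rw [hm _ measurableSet_Ioi, hIoc]

end IsMarginalResponse

end MarginalResponse

theorem conditional_mean_decomposition_general
    {Ω 𝒵 : Type*} [MeasureSpace Ω] [IsProbabilityMeasure (volume : Measure Ω)]
    [MeasurableSpace 𝒵]
    (Y Y1 Y0 V : Ω → ℝ) (Z : Ω → 𝒵) (P : 𝒵 → ℝ)
    (hPmeas : Measurable P) (hZmeas : Measurable Z) (hVmeas : Measurable V)
    (hPrange : ∀ z, P z ∈ Set.Icc (0:ℝ) 1)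
    (hindep : IndepFun Z (fun ω => (Y1 ω, Y0 ω, V ω)) (volume : Measure Ω))
    (hY1int : Integrable Y1 (volume : Measure Ω))
    (hY0int : Integrable Y0 (volume : Measure Ω))
    (hYdef : ∀ ω, Y ω = Y1 ω * (if V ω ≤ P (Z ω) then 1 else 0)
        + Y0 ω * (if V ω ≤ P (Z ω) then 0 else 1))
    (m1 m0 : ℝ → ℝ)
    (hm1 : ∀ s : Set ℝ, MeasurableSet s →
      ∫ ω in V ⁻¹' s, Y1 ω = ∫ v in s ∩ Set.Icc (0:ℝ) 1, m1 v)
    (hm0 : ∀ s : Set ℝ, MeasurableSet s →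
      ∫ ω in V ⁻¹' s, Y0 ω = ∫ v in s ∩ Set.Icc (0:ℝ) 1, m0 v) :
    (volume : Measure Ω)[Y | MeasurableSpace.comap Z inferInstance]
      =ᵐ[(volume : Measure Ω)]
      fun ω => (∫ v in Set.Ioc 0 (P (Z ω)), m1 v) + ∫ v in Set.Ioc (P (Z ω)) 1, m0 v := by
  set select : 𝒵 × ℝ × ℝ × ℝ → ℝ := fun p => if p.2.2.2 ≤ P p.1 then p.2.1 else p.2.2.1
  have hY : Y = fun ω => select (Z ω, Y1 ω, Y0 ω, V ω) := by
    funext ω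
    by_cases h : V ω ≤ P (Z ω) <;> simp [hYdef, select, h]
  have hselect : StronglyMeasurable select :=
    (Measurable.ite (measurableSet_le measurable_snd.snd.snd (hPmeas.comp measurable_fst))
      measurable_snd.fst measurable_snd.snd.fst).stronglyMeasurable
  have hW : AEMeasurable (fun ω => (Y1 ω, Y0 ω, V ω)) :=
    hY1int.aemeasurable.prodMk (hY0int.aemeasurable.prodMk hVmeas.aemeasurable)
  rw [hY]
  filter_upwards [hindep.condExp_comp_prod_ae_eq_integral hZmeas hW hselect
    (hY1int.ite_le hVmeas (hPmeas.comp hZmeas) hY0int)] with ω hω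
  obtain ⟨hP0, hP1⟩ := hPrange (Z ω)
  rw [hω]
  simp only [select]
  rw [integral_ite_le hVmeas hY1int hY0int, IsMarginalResponse.setIntegral_preimage_Iic hm1 hP1,
    IsMarginalResponse.setIntegral_preimage_Ioi hm0 hP0]

/-- In the selection model `Y = Y₁·1{V ≤ P(Z)} + Y₀·1{V > P(Z)}` with `Z ⫫ (Y₁,Y₀,V)` and
`V ~ U[0,1]`, the conditional mean of `Y` given `Z` decomposes as
`E[Y|Z=z] = ∫₀^{P(z)} E[Y₁|V=v] dv + ∫_{P(z)}^1 E[Y₀|V=v] dv`. -/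
theorem conditional_mean_decomposition
    {Ω 𝒵 : Type*} [MeasureSpace Ω] [IsProbabilityMeasure (volume : Measure Ω)]
    [MeasurableSpace 𝒵]
    (Y Y1 Y0 V : Ω → ℝ) (Z : Ω → 𝒵) (P : 𝒵 → ℝ)
    (hPmeas : Measurable P) (hZmeas : Measurable Z) (hVmeas : Measurable V)
    (hY1meas : Measurable Y1) (hY0meas : Measurable Y0)
    (hPrange : ∀ z, P z ∈ Set.Icc (0:ℝ) 1)
    (hunif : (volume : Measure Ω).map V = (volume : Measure ℝ).restrict (Set.Icc 0 1))
    (hindep : IndepFun Z (fun ω => (Y1 ω, Y0 ω, V ω)) (volume : Measure Ω))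
    (hY1int : Integrable Y1 (volume : Measure Ω))
    (hY0int : Integrable Y0 (volume : Measure Ω))
    (hYdef : ∀ ω, Y ω = Y1 ω * (if V ω ≤ P (Z ω) then 1 else 0)
        + Y0 ω * (if V ω ≤ P (Z ω) then 0 else 1))
    (m1 m0 : ℝ → ℝ)
    (hm1 : ∀ s : Set ℝ, MeasurableSet s →
      ∫ ω in V ⁻¹' s, Y1 ω = ∫ v in s ∩ Set.Icc (0:ℝ) 1, m1 v)
    (hm0 : ∀ s : Set ℝ, MeasurableSet s →
      ∫ ω in V ⁻¹' s, Y0 ω = ∫ v in s ∩ Set.Icc (0:ℝ) 1, m0 v) :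
    (volume : Measure Ω)[Y | MeasurableSpace.comap Z inferInstance]
      =ᵐ[(volume : Measure Ω)]
      fun ω => (∫ v in Set.Ioc 0 (P (Z ω)), m1 v) + ∫ v in Set.Ioc (P (Z ω)) 1, m0 v :=
  conditional_mean_decomposition_general Y Y1 Y0 V Z P hPmeas hZmeas hVmeas hPrange hindep hY1int
    hY0int hYdef m1 m0 hm1 hm0
end
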